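/- Let T : X → Y be a Dunford-Pettis p-convergent operator that is not strictly singular. Then X contains an infinite dimensional closed subspace Z with the p-Dunford-Pettis relatively compact property, and T(Z) is an infinite dimensional closed subspace of Y with the p-Dunford-Pettis relatively compact property. -/

import Mathlib

/-! Pick a closed infinite-dimensional `Z` on which `‖T z‖ ≥ c ‖z‖`. Weak `p`-summability and the
Dunford-Pettis property of a set pass through bounded operators, so a `p`-right null sequence
`(z n)` in `Z` is sent by `T` to a norm null sequence, whence `‖z n‖ ≤ c⁻¹ ‖T (z n)‖ → 0`.
The lower bound also makes `T : Z → T(Z)` an isomorphism; hence `T(Z)` is closed and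
infinite-dimensional, and a `p`-right null sequence `(w n)` in `T(Z)` is the image under `T` of
the `p`-right null sequence `T⁻¹ (w n)` in `X`, so it is norm null. -/

open Filter Topology Set
open scoped ENNReal

noncomputable section

/-- A sequence in a normed space is weakly null. -/
def WeaklyNull {E : Type*} [NormedAddCommGroup E] [NormedSpace ℝ E] (x : ℕ → E) : Prop :=
  ∀ φ : E →L[ℝ] ℝ, Tendsto (fun n => φ (x n)) atTop (𝓝 0)

/-- A bounded set on which every weakly null sequence of functionals converges uniformly. -/
def DunfordPettisSet {E : Type*} [NormedAddCommGroup E] [NormedSpace ℝ E] (K : Set E) : Prop :=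
  Bornology.IsBounded K ∧ ∀ f : ℕ → (E →L[ℝ] ℝ), WeaklyNull f →
    ∀ ε > 0, ∃ N : ℕ, ∀ n ≥ N, ∀ x ∈ K, |f n x| < ε

/-- Weakly `p`-summable sequence; for `p = ∞` this means weakly null. -/
def WeaklyPSummable (p : ℝ≥0∞) {E : Type*} [NormedAddCommGroup E] [NormedSpace ℝ E]
    (x : ℕ → E) : Prop :=
  if p = ∞ then WeaklyNull x else ∀ φ : E →L[ℝ] ℝ, Memℓp (fun n => φ (x n)) p

def NormNull {E : Type*} [NormedAddCommGroup E] (x : ℕ → E) : Prop :=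
  Tendsto (fun n => ‖x n‖) atTop (𝓝 0)

def PRightNull (p : ℝ≥0∞) {E : Type*} [NormedAddCommGroup E] [NormedSpace ℝ E]
    (x : ℕ → E) : Prop :=
  WeaklyPSummable p x ∧ DunfordPettisSet (Set.range x)

def WeaklyPCauchy (p : ℝ≥0∞) {E : Type*} [NormedAddCommGroup E] [NormedSpace ℝ E]
    (x : ℕ → E) : Prop :=
  ∀ k l : ℕ → ℕ, StrictMono k → StrictMono l →
    WeaklyPSummable p (fun n => x (k n) - x (l n))

def PRightCauchy (p : ℝ≥0∞) {E : Type*} [NormedAddCommGroup E] [NormedSpace ℝ E]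
    (x : ℕ → E) : Prop :=
  WeaklyPCauchy p x ∧ DunfordPettisSet (Set.range x)

/-- `p`-Dunford-Pettis relatively compact property. -/
def HasDPrcP (p : ℝ≥0∞) (E : Type*) [NormedAddCommGroup E] [NormedSpace ℝ E] : Prop :=
  ∀ x : ℕ → E, PRightNull p x → NormNull x

/-- A (not necessarily linear) map is Dunford-Pettis `p`-convergent. -/
def DPpConvergent (p : ℝ≥0∞) {E F : Type*} [NormedAddCommGroup E] [NormedSpace ℝ E]
    [NormedAddCommGroup F] (f : E → F) : Prop :=
  ∀ x : ℕ → E, PRightNull p x → NormNull (fun n => f (x n))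

/-- A map is `p`-convergent. -/
def PConvergent (p : ℝ≥0∞) {E F : Type*} [NormedAddCommGroup E] [NormedSpace ℝ E]
    [NormedAddCommGroup F] (f : E → F) : Prop :=
  ∀ x : ℕ → E, WeaklyPSummable p x → NormNull (fun n => f (x n))

/-- The adjoint of a continuous linear operator between normed spaces. -/
def opAdjoint {E F : Type*} [NormedAddCommGroup E] [NormedSpace ℝ E]
    [NormedAddCommGroup F] [NormedSpace ℝ F] (T : E →L[ℝ] F) :
    (F →L[ℝ] ℝ) →L[ℝ] (E →L[ℝ] ℝ) :=
  (ContinuousLinearMap.compL ℝ E F ℝ).flip T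


/-- `T` is strictly singular: it is not bounded below (an isomorphism onto its range)
on any infinite-dimensional closed subspace. -/
def StrictlySingular {X Y : Type*} [NormedAddCommGroup X] [NormedSpace ℝ X]
    [NormedAddCommGroup Y] [NormedSpace ℝ Y] (T : X →L[ℝ] Y) : Prop :=
  ¬ ∃ Z : Submodule ℝ X, IsClosed (Z : Set X) ∧ ¬ FiniteDimensional ℝ Z ∧
      ∃ c > 0, ∀ z ∈ Z, c * ‖z‖ ≤ ‖T z‖

section Transfer

variable {E F : Type*} [NormedAddCommGroup E] [NormedSpace ℝ E]
  [NormedAddCommGroup F] [NormedSpace ℝ F]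

lemma WeaklyNull.map {x : ℕ → E} (hx : WeaklyNull x) (A : E →L[ℝ] F) :
    WeaklyNull (fun n => A (x n)) :=
  fun φ => hx (φ.comp A)

lemma WeaklyPSummable.map {p : ℝ≥0∞} {x : ℕ → E} (hx : WeaklyPSummable p x) (A : E →L[ℝ] F) :
    WeaklyPSummable p (fun n => A (x n)) := by
  unfold WeaklyPSummable at hx ⊢
  split_ifs at hx ⊢
  · exact hx.map A
  · exact fun φ => hx (φ.comp A)

lemma DunfordPettisSet.image {K : Set E} (hK : DunfordPettisSet K) (A : E →L[ℝ] F) :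
    DunfordPettisSet (A '' K) := by
  refine ⟨A.lipschitz.isBounded_image hK.1, fun f hf ε hε => ?_⟩
  -- `f n ∘ A = opAdjoint A (f n)`, and the adjoint preserves weakly null sequences
  obtain ⟨N, hN⟩ := hK.2 _ (hf.map (opAdjoint A)) ε hε
  exact ⟨N, fun n hn _ ⟨x, hx, hAx⟩ => hAx ▸ hN n hn x hx⟩

lemma PRightNull.map {p : ℝ≥0∞} {x : ℕ → E} (hx : PRightNull p x) (A : E →L[ℝ] F) :
    PRightNull p (fun n => A (x n)) := by
  refine ⟨hx.1.map A, ?_⟩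
  rw [Set.range_comp' A x]
  exact hx.2.image A

lemma DPpConvergent.comp {G : Type*} [NormedAddCommGroup G] {p : ℝ≥0∞} {f : F → G}
    (hf : DPpConvergent p f) (A : E →L[ℝ] F) : DPpConvergent p (f ∘ A) :=
  fun _ hx => hf _ (hx.map A)

lemma HasDPrcP.of_dPpConvergent {G : Type*} [NormedAddCommGroup G] {p : ℝ≥0∞} {g : E → G}
    (hg : DPpConvergent p g) {C : ℝ} (hC : ∀ x, ‖x‖ ≤ C * ‖g x‖) : HasDPrcP p E := by
  intro x hx
  have hgx : Tendsto (fun n => C * ‖g (x n)‖) atTop (𝓝 0) := by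
    simpa using (hg x hx).const_mul C
  exact squeeze_zero (fun n => norm_nonneg _) (fun n => hC (x n)) hgx

end Transfer

section BoundedBelow

variable {X Y : Type*} [NormedAddCommGroup X] [NormedSpace ℝ X]
  [NormedAddCommGroup Y] [NormedSpace ℝ Y]
  {T : X →L[ℝ] Y} {Z : Submodule ℝ X} {c : ℝ}

lemma isClosed_map_of_bound [CompleteSpace X] (hZ : IsClosed (Z : Set X)) (hc : 0 < c)
    (hT : ∀ z ∈ Z, c * ‖z‖ ≤ ‖T z‖) : IsClosed ((Z.map T.toLinearMap : Submodule ℝ Y) : Set Y) := by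
  have : CompleteSpace Z := hZ.completeSpace_coe
  have hanti : AntilipschitzWith (Real.toNNReal c⁻¹) (T.comp Z.subtypeL) :=
    ContinuousLinearMap.antilipschitz_of_bound _ fun z => by
      rw [Real.coe_toNNReal _ (inv_nonneg.2 hc.le), le_inv_mul_iff₀ hc]
      exact hT z z.2
  rw [Submodule.map_coe, Set.image_eq_range]
  exact hanti.isClosed_range (T.comp Z.subtypeL).uniformContinuous

lemma exists_continuousLinearEquiv_map_of_bound (hc : 0 < c) (hT : ∀ z ∈ Z, c * ‖z‖ ≤ ‖T z‖) :
    ∃ e : Z ≃L[ℝ] Z.map T.toLinearMap, ∀ z : Z, (e z : Y) = T z := by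
  let TZ : Z →ₗ[ℝ] Z.map T.toLinearMap :=
    (T.toLinearMap.comp Z.subtype).codRestrict _ fun z => Submodule.mem_map_of_mem z.2
  have hinj : Function.Injective TZ := by
    refine (injective_iff_map_eq_zero TZ).2 fun z hz => norm_le_zero_iff.1 ?_
    have hTz : T z = 0 := congrArg Subtype.val hz
    have := hT z z.2
    rw [hTz, norm_zero] at this
    exact le_of_mul_le_mul_left (by simpa using this) hc
  have hsurj : Function.Surjective TZ := by
    rintro ⟨_, x, hx, rfl⟩
    exact ⟨⟨x, hx⟩, rfl⟩
  let e := LinearEquiv.ofBijective TZ ⟨hinj, hsurj⟩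
  refine ⟨e.toContinuousLinearEquivOfBounds ‖T‖ c⁻¹ (fun z => T.le_opNorm z) fun w => ?_,
    fun _ => rfl⟩
  have hTe : T (e.symm w) = w := congrArg Subtype.val (e.apply_symm_apply w)
  rw [le_inv_mul_iff₀ hc]
  have := hT _ (e.symm w).2
  rwa [hTe] at this

end BoundedBelow

theorem stmt9_general {X Y : Type*} [NormedAddCommGroup X] [NormedSpace ℝ X] [CompleteSpace X]
    [NormedAddCommGroup Y] [NormedSpace ℝ Y]
    (p : ℝ≥0∞) (T : X →L[ℝ] Y)
    (hT : DPpConvergent p T) (hss : ¬ StrictlySingular T) :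
    ∃ Z : Submodule ℝ X, IsClosed (Z : Set X) ∧ ¬ FiniteDimensional ℝ Z ∧ HasDPrcP p Z ∧
      IsClosed ((Z.map T.toLinearMap : Submodule ℝ Y) : Set Y) ∧
      ¬ FiniteDimensional ℝ (Z.map T.toLinearMap) ∧ HasDPrcP p (Z.map T.toLinearMap) := by
  obtain ⟨Z, hZ, hZfin, c, hc, hbound⟩ := not_not.1 hss
  obtain ⟨e, he⟩ := exists_continuousLinearEquiv_map_of_bound hc hbound
  have hTe : ∀ w, T (e.symm w) = (w : Y) := fun w => by rw [← he, e.apply_symm_apply]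
  refine ⟨Z, hZ, hZfin, ?_, isClosed_map_of_bound hZ hc hbound,
    fun hWfin => hZfin (Module.Finite.equiv e.symm.toLinearEquiv), ?_⟩
  · refine HasDPrcP.of_dPpConvergent (hT.comp Z.subtypeL) (C := c⁻¹) fun z => ?_
    rw [le_inv_mul_iff₀ hc]
    exact hbound z z.2
  · refine HasDPrcP.of_dPpConvergent (hT.comp (Z.subtypeL.comp e.symm.toContinuousLinearMap))
      (C := 1) fun w => ?_
    simp [hTe]

theorem stmt9 {X Y : Type*} [NormedAddCommGroup X] [NormedSpace ℝ X] [CompleteSpace X]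
    [NormedAddCommGroup Y] [NormedSpace ℝ Y] [CompleteSpace Y]
    (p : ℝ≥0∞) (hp : 1 ≤ p) (T : X →L[ℝ] Y)
    (hT : DPpConvergent p T) (hss : ¬ StrictlySingular T) :
    ∃ Z : Submodule ℝ X, IsClosed (Z : Set X) ∧ ¬ FiniteDimensional ℝ Z ∧ HasDPrcP p Z ∧
      IsClosed ((Z.map T.toLinearMap : Submodule ℝ Y) : Set Y) ∧
      ¬ FiniteDimensional ℝ (Z.map T.toLinearMap) ∧ HasDPrcP p (Z.map T.toLinearMap) :=
  stmt9_general p T hT hss
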